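/- arXiv:2511.12064 — 6 statements merged into one kernel-verified Lean document; each statement's English description precedes it below -/
import Mathlib

section
/- For any symmetric convex function f : ℝ^n → ℝ ∪ {∞} (invariant under coordinate permutations), the function F on n×n Hermitian matrices defined by F(X) = f(λ(X)), where λ(X) is the eigenvalue vector of X, is convex and unitarily invariant: F(kXk†) = F(X) for all unitary k. -/
/-!
Write `X = U diag(λ) U*`. For a unitary `V`, the real diagonal of `V* X V` is `B λ` with
`B i j = |(V* U) i j|²`, and `B` is doubly stochastic. By Birkhoff, `B λ` is a convex combination
of permutations of `λ`, so Jensen and the symmetry of `f` give `f (diag (V* X V)) ≤ f λ(X)`, with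
equality when `V` diagonalises `X`. Taking `V` to diagonalise `aX + bY`, the diagonal is linear in
the matrix, which yields convexity. Unitary invariance is cheaper: `k X k*` and `X` have the same
characteristic polynomial, hence the same (sorted) eigenvalues.
-/

open Matrix

namespace EReal

lemma coe_mul_sum_of_nonneg {t : ℝ} (ht : 0 ≤ t) {ι : Type*} (s : Finset ι) (g : ι → EReal) :
    (t : EReal) * ∑ i ∈ s, g i = ∑ i ∈ s, (t : EReal) * g i := by
  induction s using Finset.cons_induction with
  | empty => simp
  | cons a s _ ih =>
    rw [Finset.sum_cons, Finset.sum_cons,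
      left_distrib_of_nonneg_of_ne_top (EReal.coe_nonneg.2 ht) (coe_ne_top t), ih]

lemma sum_coe_mul_of_nonneg {ι : Type*} (s : Finset ι) {w : ι → ℝ} (hw : ∀ i ∈ s, 0 ≤ w i)
    (c : EReal) : ∑ i ∈ s, (w i : EReal) * c = ((∑ i ∈ s, w i : ℝ) : EReal) * c := by
  induction s using Finset.cons_induction with
  | empty => simp
  | cons a s _ ih =>
    rw [Finset.forall_mem_cons] at hw
    rw [Finset.sum_cons, Finset.sum_cons, ih hw.2, coe_add,
      right_distrib_of_nonneg (EReal.coe_nonneg.2 hw.1)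
        (EReal.coe_nonneg.2 (Finset.sum_nonneg hw.2))]

end EReal

def ERealConvex {E : Type*} [AddCommMonoid E] [Module ℝ E] (f : E → EReal) : Prop :=
  ∀ (x y : E) (a b : ℝ), 0 ≤ a → 0 ≤ b → a + b = 1 →
    f (a • x + b • y) ≤ (a : EReal) * f x + (b : EReal) * f y

namespace Matrix

variable {ι : Type*} [Fintype ι] [DecidableEq ι]

theorem normSq_mem_doublyStochastic_of_mem_unitaryGroup {U : Matrix ι ι ℂ}
    (hU : U ∈ unitaryGroup ι ℂ) :
    (of fun i j => Complex.normSq (U i j)) ∈ doublyStochastic ℝ ι := by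
  refine mem_doublyStochastic_iff_sum.2
    ⟨fun _ _ => Complex.normSq_nonneg _, fun i => ?_, fun j => ?_⟩
  · have h := congrFun₂ (mem_unitaryGroup_iff.mp hU) i i
    simp only [mul_apply, star_apply, one_apply_eq, Complex.star_def, Complex.mul_conj] at h
    exact_mod_cast h
  · have h := congrFun₂ (mem_unitaryGroup_iff'.mp hU) j j
    simp only [mul_apply, star_apply, one_apply_eq, Complex.star_def,
      ← Complex.normSq_eq_conj_mul_self] at h
    exact_mod_cast h

theorem re_diag_mul_diagonal_mul_star (W : Matrix ι ι ℂ) (d : ι → ℝ) :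
    (fun i => ((W * diagonal (RCLike.ofReal ∘ d : ι → ℂ) * star W) i i).re)
      = (of fun i j => Complex.normSq (W i j)) *ᵥ d := by
  ext i
  rw [mul_apply, Complex.re_sum]
  simp only [mul_diagonal, star_apply, mulVec, dotProduct, of_apply]
  refine Finset.sum_congr rfl fun j _ => ?_
  simp [Complex.normSq_apply]
  ring

end Matrix

namespace Matrix.IsHermitian

variable {ι : Type*} [Fintype ι] [DecidableEq ι] {X : Matrix ι ι ℂ}

theorem re_diag_star_mul_mul (hX : X.IsHermitian) (V : Matrix ι ι ℂ) :
    (fun i => ((star V * X * V) i i).re)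
      = (of fun i j => Complex.normSq ((star V * hX.eigenvectorUnitary) i j))
          *ᵥ hX.eigenvalues := by
  rw [← re_diag_mul_diagonal_mul_star]
  conv_lhs => rw [hX.spectral_theorem]
  simp only [Unitary.conjStarAlgAut_apply, star_mul, star_star, Matrix.mul_assoc]

theorem re_diag_star_eigenvectorUnitary_mul_mul (hX : X.IsHermitian) :
    (fun i => ((star (hX.eigenvectorUnitary : Matrix ι ι ℂ) * X
      * hX.eigenvectorUnitary) i i).re) = hX.eigenvalues := by
  have hdiag := hX.conjStarAlgAut_star_eigenvectorUnitary
  rw [Unitary.conjStarAlgAut_apply, Unitary.coe_star, star_star] at hdiag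
  ext i
  simp [hdiag]

theorem eigenvalues_unitary_conj {k : Matrix ι ι ℂ} (hX : X.IsHermitian)
    (hk : k ∈ unitaryGroup ι ℂ) (hY : (k * X * star k).IsHermitian) :
    hY.eigenvalues = hX.eigenvalues :=
  (eigenvalues_eq_eigenvalues_iff hY hX).2 <| by
    rw [charpoly_mul_comm, ← Matrix.mul_assoc, mem_unitaryGroup_iff'.mp hk, Matrix.one_mul]

end Matrix.IsHermitian

namespace ERealConvex

section General

variable {E : Type*} [AddCommMonoid E] [Module ℝ E] {f : E → EReal}

theorem map_sum_le (hf : ERealConvex f) {ι : Type*} (s : Finset ι) {w : ι → ℝ} (p : ι → E)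
    (hw₀ : ∀ i ∈ s, 0 ≤ w i) (hw₁ : ∑ i ∈ s, w i = 1) :
    f (∑ i ∈ s, w i • p i) ≤ ∑ i ∈ s, (w i : EReal) * f (p i) := by
  induction s using Finset.cons_induction generalizing w with
  | empty => simp at hw₁
  | cons a s _ ih =>
    rw [Finset.forall_mem_cons] at hw₀
    rw [Finset.sum_cons] at hw₁
    rw [Finset.sum_cons, Finset.sum_cons]
    set t := ∑ i ∈ s, w i with ht_def
    have ht : 0 ≤ t := Finset.sum_nonneg hw₀.2
    rcases ht.eq_or_lt with ht0 | ht0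
    · have hw : ∀ i ∈ s, w i = 0 := (Finset.sum_eq_zero_iff_of_nonneg hw₀.2).1 ht0.symm
      have hwa : w a = 1 := by linarith
      rw [Finset.sum_eq_zero fun i hi => by rw [hw i hi, zero_smul],
        Finset.sum_eq_zero fun i hi => by rw [hw i hi, EReal.coe_zero, zero_mul], hwa]
      simp
    · have hrescale : ∑ i ∈ s, w i • p i = t • ∑ i ∈ s, (w i / t) • p i := by
        simp only [Finset.smul_sum, smul_smul, mul_div_cancel₀ _ ht0.ne']
      calc f (w a • p a + ∑ i ∈ s, w i • p i)
          = f (w a • p a + t • ∑ i ∈ s, (w i / t) • p i) := by rw [hrescale]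
        _ ≤ w a * f (p a) + t * f (∑ i ∈ s, (w i / t) • p i) := hf _ _ _ _ hw₀.1 ht hw₁
        _ ≤ w a * f (p a) + t * ∑ i ∈ s, ((w i / t : ℝ) : EReal) * f (p i) := by
          gcongr
          exact ih (fun i hi => div_nonneg (hw₀.2 i hi) ht)
            (by rw [← Finset.sum_div, ← ht_def, div_self ht0.ne'])
        _ = w a * f (p a) + ∑ i ∈ s, (w i : EReal) * f (p i) := by
          simp only [EReal.coe_mul_sum_of_nonneg ht, ← mul_assoc, ← EReal.coe_mul,
            mul_div_cancel₀ _ ht0.ne']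

end General

section Spectral

variable {ι : Type*} [Fintype ι] [DecidableEq ι] {f : (ι → ℝ) → EReal}

theorem map_mulVec_le_of_mem_doublyStochastic (hf : ERealConvex f)
    (hsym : ∀ (σ : Equiv.Perm ι) (x : ι → ℝ), f (x ∘ σ) = f x) {M : Matrix ι ι ℝ}
    (hM : M ∈ doublyStochastic ℝ ι) (x : ι → ℝ) : f (M *ᵥ x) ≤ f x := by
  obtain ⟨w, hw₀, hw₁, rfl⟩ := exists_eq_sum_perm_of_mem_doublyStochastic hM
  have hmix : (∑ σ, w σ • σ.permMatrix ℝ) *ᵥ x = ∑ σ, w σ • (x ∘ σ) := by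
    simp only [sum_mulVec, smul_mulVec, permMatrix_mulVec]
  calc f ((∑ σ, w σ • σ.permMatrix ℝ) *ᵥ x)
      = f (∑ σ, w σ • (x ∘ σ)) := by rw [hmix]
    _ ≤ ∑ σ, (w σ : EReal) * f (x ∘ σ) := hf.map_sum_le _ _ (fun σ _ => hw₀ σ) hw₁
    _ = f x := by
      simp only [hsym, EReal.sum_coe_mul_of_nonneg _ (fun σ _ => hw₀ σ), hw₁, EReal.coe_one,
        one_mul]

theorem map_re_diag_star_mul_mul_le (hf : ERealConvex f)
    (hsym : ∀ (σ : Equiv.Perm ι) (x : ι → ℝ), f (x ∘ σ) = f x) {X V : Matrix ι ι ℂ}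
    (hX : X.IsHermitian) (hV : V ∈ unitaryGroup ι ℂ) :
    f (fun i => ((star V * X * V) i i).re) ≤ f hX.eigenvalues := by
  rw [hX.re_diag_star_mul_mul V]
  exact hf.map_mulVec_le_of_mem_doublyStochastic hsym
    (normSq_mem_doublyStochastic_of_mem_unitaryGroup
      (mul_mem (Unitary.star_mem hV) hX.eigenvectorUnitary.2)) _

theorem comp_eigenvalues_le (hf : ERealConvex f)
    (hsym : ∀ (σ : Equiv.Perm ι) (x : ι → ℝ), f (x ∘ σ) = f x) {X Y : Matrix ι ι ℂ}
    (hX : X.IsHermitian) (hY : Y.IsHermitian) {a b : ℝ} (ha : 0 ≤ a) (hb : 0 ≤ b)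
    (hab : a + b = 1) (hZ : (a • X + b • Y).IsHermitian) :
    f hZ.eigenvalues ≤ a * f hX.eigenvalues + b * f hY.eigenvalues := by
  set U := (hZ.eigenvectorUnitary : Matrix ι ι ℂ)
  have hU : U ∈ unitaryGroup ι ℂ := hZ.eigenvectorUnitary.2
  calc f hZ.eigenvalues = f (fun i => ((star U * (a • X + b • Y) * U) i i).re) := by
        rw [hZ.re_diag_star_eigenvectorUnitary_mul_mul]
    _ = f (a • (fun i => ((star U * X * U) i i).re)
          + b • (fun i => ((star U * Y * U) i i).re)) := by
        congr 1
        ext i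
        simp [Matrix.mul_add, Matrix.add_mul]
    _ ≤ a * f (fun i => ((star U * X * U) i i).re)
          + b * f (fun i => ((star U * Y * U) i i).re) :=
        hf _ _ _ _ ha hb hab
    _ ≤ a * f hX.eigenvalues + b * f hY.eigenvalues := by
        gcongr
        · exact hf.map_re_diag_star_mul_mul_le hsym hX hU
        · exact hf.map_re_diag_star_mul_mul_le hsym hY hU

end Spectral

end ERealConvex

/-- if `f : ℝⁿ → ℝ ∪ {∞}` is a symmetric convex function, then the
function `F` on Hermitian matrices defined by `F X = f (eigenvalues of X)` is
convex (on the real vector space of Hermitian matrices) and unitarily invariant. -/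
theorem spectral_convex_unitarily_invariant (n : ℕ)
    (f : (Fin n → ℝ) → EReal)
    (hconv : ∀ (x y : Fin n → ℝ) (a b : ℝ), 0 ≤ a → 0 ≤ b → a + b = 1 →
      f (a • x + b • y) ≤ (a : EReal) * f x + (b : EReal) * f y)
    (hsym : ∀ (σ : Equiv.Perm (Fin n)) (x : Fin n → ℝ), f (x ∘ σ) = f x)
    (F : Matrix (Fin n) (Fin n) ℂ → EReal)
    (hF : ∀ (X : Matrix (Fin n) (Fin n) ℂ) (hX : X.IsHermitian),
      F X = f hX.eigenvalues) :
    (∀ (X Y : Matrix (Fin n) (Fin n) ℂ), X.IsHermitian → Y.IsHermitian →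
      ∀ (a b : ℝ), 0 ≤ a → 0 ≤ b → a + b = 1 →
        F (a • X + b • Y) ≤ (a : EReal) * F X + (b : EReal) * F Y) ∧
    (∀ (X : Matrix (Fin n) (Fin n) ℂ), X.IsHermitian →
      ∀ k ∈ Matrix.unitaryGroup (Fin n) ℂ, F (k * X * star k) = F X) := by
  refine ⟨fun X Y hX hY a b ha hb hab => ?_, fun X hX k hk => ?_⟩
  · have hZ : (a • X + b • Y).IsHermitian :=
      (hX.smul (IsSelfAdjoint.all a)).add (hY.smul (IsSelfAdjoint.all b))
    rw [hF _ hZ, hF X hX, hF Y hY]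
    exact ERealConvex.comp_eigenvalues_le hconv hsym hX hY ha hb hab hZ
  · have hY : (k * X * star k).IsHermitian := isHermitian_mul_mul_conjTranspose k hX
    rw [hF _ hY, hF X hX, hX.eigenvalues_unitary_conj hk hY]
end

section
/- For h ∈ ℝ^n, the n×n matrix S^h with entries S^h_{ij} = ((hᵢ - hⱼ)/2) / sinh((hᵢ - hⱼ)/2) (interpreted as 1 when hᵢ = hⱼ) is Hermitian positive semidefinite. -/
open MeasureTheory Real Set Filter Topology

/-!
The kernel is a Gram kernel in `L²(0, ∞)`: with `fᵤ(t) = e^{u/2} / (t + eᵘ)`,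
`∫₀^∞ fᵤ f_v = e^{(u+v)/2} (u - v) / (eᵘ - eᵛ) = ((u - v)/2) / sinh ((u - v)/2)`,
since `(log a - log b) / (a - b) = ∫₀^∞ dt / ((t + a)(t + b))`; for `u = v` both sides are `1`.
Gram matrices are positive semidefinite.
-/

theorem Matrix.posSemidef_of_integral_mul {ι α : Type*} [Finite ι] [MeasurableSpace α]
    {μ : Measure α} {f : ι → α → ℝ} (hf : ∀ i, MemLp (f i) 2 μ) :
    (Matrix.of fun i j => ∫ x, f i x * f j x ∂μ).PosSemidef := by
  have hgram : (Matrix.of fun i j => ∫ x, f i x * f j x ∂μ) =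
      gram ℝ fun i => (hf i).toLp (f i) := by
    ext i j
    rw [of_apply, gram_apply, L2.inner_def]
    refine integral_congr_ae ?_
    filter_upwards [(hf i).coeFn_toLp, (hf j).coeFn_toLp] with x hi hj
    simp [hi, hj, mul_comm]
  exact hgram ▸ posSemidef_gram ℝ _

section
variable {a b : ℝ}

theorem hasDerivAt_neg_inv_add {x : ℝ} (hx : x + a ≠ 0) :
    HasDerivAt (fun t => -(t + a)⁻¹) ((x + a)⁻¹ * (x + a)⁻¹) x :=
  (((hasDerivAt_id' x).add_const a).inv hx).neg.congr_deriv (by field_simp)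

theorem tendsto_neg_inv_add_atTop : Tendsto (fun t => -(t + a)⁻¹) atTop (𝓝 0) := by
  simpa using (tendsto_inv_atTop_zero.comp (tendsto_atTop_add_const_right _ a tendsto_id)).neg

theorem hasDerivAt_log_add_sub_log_add {x : ℝ} (ha : x + a ≠ 0) (hb : x + b ≠ 0) :
    HasDerivAt (fun t => log (t + a) - log (t + b)) ((b - a) * ((x + a)⁻¹ * (x + b)⁻¹)) x :=
  ((((hasDerivAt_id' x).add_const a).log ha).sub
    (((hasDerivAt_id' x).add_const b).log hb)).congr_deriv (by field_simp; ring)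

theorem tendsto_log_add_sub_log_add_atTop :
    Tendsto (fun t => log (t + a) - log (t + b)) atTop (𝓝 0) := by
  simpa using (tendsto_log_comp_add_sub_log a).sub (tendsto_log_comp_add_sub_log b)

theorem integrableOn_Ioi_inv_add_mul_self (ha : 0 < a) :
    IntegrableOn (fun t => (t + a)⁻¹ * (t + a)⁻¹) (Ioi 0) :=
  integrableOn_Ioi_deriv_of_nonneg' (fun x (hx : 0 ≤ x) => hasDerivAt_neg_inv_add (by positivity))
    (fun _ _ => mul_self_nonneg _) tendsto_neg_inv_add_atTop

theorem integral_Ioi_inv_add_mul_self (ha : 0 < a) :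
    ∫ t in Ioi 0, (t + a)⁻¹ * (t + a)⁻¹ = a⁻¹ := by
  rw [integral_Ioi_of_hasDerivAt_of_nonneg'
    (fun x (hx : 0 ≤ x) => hasDerivAt_neg_inv_add (by positivity))
    (fun _ _ => mul_self_nonneg _) tendsto_neg_inv_add_atTop]
  simp

theorem integral_Ioi_inv_add_mul_inv_add (ha : 0 < a) (hb : 0 < b) (hab : a ≠ b) :
    ∫ t in Ioi 0, (t + a)⁻¹ * (t + b)⁻¹ = (log a - log b) / (a - b) := by
  have hba : b - a ≠ 0 := sub_ne_zero.2 hab.symm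
  have hderiv : ∀ x ∈ Ici (0 : ℝ), HasDerivAt (fun t => (log (t + a) - log (t + b)) / (b - a))
      ((x + a)⁻¹ * (x + b)⁻¹) x := fun x (hx : 0 ≤ x) =>
    ((hasDerivAt_log_add_sub_log_add (by positivity) (by positivity)).div_const _).congr_deriv
      (by field_simp)
  rw [integral_Ioi_of_hasDerivAt_of_nonneg' hderiv (fun x (hx : 0 < x) => by positivity)
    (by simpa using tendsto_log_add_sub_log_add_atTop.div_const (b - a)), zero_add, zero_add]
  field_simp
  ring

theorem memLp_two_inv_add (ha : 0 < a) :
    MemLp (fun t => (t + a)⁻¹) 2 (volume.restrict (Ioi 0)) := by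
  have hmeas : Measurable fun t : ℝ => (t + a)⁻¹ := by fun_prop
  rw [memLp_two_iff_integrable_sq hmeas.aestronglyMeasurable]
  simpa only [sq] using (integrableOn_Ioi_inv_add_mul_self ha).integrable

end

theorem exp_sub_exp_eq_two_mul_exp_mul_sinh (u v : ℝ) :
    exp u - exp v = 2 * exp ((u + v) / 2) * sinh ((u - v) / 2) := by
  have hu : exp u = exp ((u + v) / 2) * exp ((u - v) / 2) := by rw [← exp_add]; ring_nf
  have hv : exp v = exp ((u + v) / 2) * exp (-((u - v) / 2)) := by rw [← exp_add]; ring_nf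
  rw [sinh_eq, hu, hv]
  ring

theorem integral_Ioi_exp_half_mul_inv_add_exp (u v : ℝ) :
    ∫ t in Ioi 0, exp (u / 2) * (t + exp u)⁻¹ * (exp (v / 2) * (t + exp v)⁻¹) =
      if u = v then 1 else ((u - v) / 2) / sinh ((u - v) / 2) := by
  have hexp (t : ℝ) : exp (u / 2) * (t + exp u)⁻¹ * (exp (v / 2) * (t + exp v)⁻¹) =
      exp ((u + v) / 2) * ((t + exp u)⁻¹ * (t + exp v)⁻¹) := by
    rw [add_div, exp_add]; ring
  simp_rw [hexp]
  rw [integral_const_mul]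
  split_ifs with huv
  · subst huv
    rw [integral_Ioi_inv_add_mul_self (exp_pos u), add_self_div_two,
      mul_inv_cancel₀ (exp_ne_zero u)]
  · have hsinh : sinh ((u - v) / 2) ≠ 0 := by
      simpa [sinh_eq_zero, sub_eq_zero] using huv
    rw [integral_Ioi_inv_add_mul_inv_add (exp_pos u) (exp_pos v) (exp_injective.ne huv),
      log_exp, log_exp, exp_sub_exp_eq_two_mul_exp_mul_sinh]
    field_simp

/-- for `h ∈ ℝⁿ`, the matrix with entries
`((hᵢ - hⱼ)/2) / sinh ((hᵢ - hⱼ)/2)` (equal to `1` when `hᵢ = hⱼ`) is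
(Hermitian) positive semidefinite. -/
theorem posSemidef_sinh_ratio_matrix (n : ℕ) (h : Fin n → ℝ) :
    Matrix.PosSemidef (Matrix.of fun i j : Fin n =>
      if h i = h j then (1 : ℝ)
      else ((h i - h j) / 2) / Real.sinh ((h i - h j) / 2)) := by
  have hmem (u : ℝ) : MemLp (fun t => exp (u / 2) * (t + exp u)⁻¹) 2 (volume.restrict (Ioi 0)) :=
    (memLp_two_inv_add (exp_pos u)).const_mul _
  simpa only [integral_Ioi_exp_half_mul_inv_add_exp] using
    Matrix.posSemidef_of_integral_mul fun i => hmem (h i)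
end

section
/- Let Ψ be a doubly stochastic linear operator on n×n complex matrices (positive, unital, and with unital adjoint), and suppose A, B ∈ H_n satisfy A = Ψ(B). Then there exist unitaries k₁,...,k_m and positive reals p₁,...,p_m with Σⱼ pⱼ = 1 such that A = Σⱼ pⱼ kⱼ† B kⱼ. -/
/-!
Diagonalise `A = U diag(a) U⋆` and `B = V diag(b) V⋆`. The map `Φ X = U⋆ Ψ(V X V⋆) U` is again
positive, unital and trace preserving, and `Φ (diag b) = diag a`; reading off diagonals gives
`a = D b` with `D i j = (Φ Eⱼⱼ)ᵢᵢ`, and `D` is doubly stochastic. By Birkhoff–von Neumann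
`D = ∑ w_σ P_σ`, so `a = ∑ w_σ (b ∘ σ)`, and each `diag (b ∘ σ)` is the conjugate of `diag b` by a
permutation matrix. Undoing the two diagonalisations exhibits `A` as `∑ w_σ k_σ⋆ B k_σ` with
`k_σ = V (U P_σ)⋆`.
-/

open Matrix Unitary
open scoped ComplexOrder

namespace Matrix

variable {n : Type*} [Fintype n] [DecidableEq n]

lemma permMatrix_mul_diagonal_mul_star_permMatrix {R : Type*} [CommRing R] [StarRing R]
    (σ : Equiv.Perm n) (d : n → R) :
    σ.permMatrix R * diagonal d * star (σ.permMatrix R) = diagonal (d ∘ σ) := by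
  rw [star_eq_conjTranspose, conjTranspose_permMatrix, Equiv.Perm.permMatrix,
    Equiv.Perm.permMatrix, PEquiv.toMatrix_toPEquiv_mul, PEquiv.mul_toMatrix_toPEquiv,
    submatrix_submatrix]
  exact submatrix_diagonal_equiv d σ

lemma permMatrix_mem_unitaryGroup {R : Type*} [CommRing R] [StarRing R] (σ : Equiv.Perm n) :
    σ.permMatrix R ∈ unitaryGroup n R := by
  rw [mem_unitaryGroup_iff', star_eq_conjTranspose, conjTranspose_permMatrix, ← permMatrix_mul,
    mul_inv_cancel, permMatrix_one]

end Matrix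

def Equiv.Perm.permUnitary {n : Type*} [Fintype n] [DecidableEq n] (R : Type*) [CommRing R]
    [StarRing R] (σ : Equiv.Perm n) : Matrix.unitaryGroup n R :=
  ⟨σ.permMatrix R, Matrix.permMatrix_mem_unitaryGroup σ⟩

namespace Matrix

variable {𝕜 : Type*} [RCLike 𝕜] {n : Type*} [Fintype n] [DecidableEq n]

section UnitaryConjugation

lemma PosSemidef.conjStarAlgAut {X : Matrix n n 𝕜} (hX : X.PosSemidef) (u : unitaryGroup n 𝕜) :
    (conjStarAlgAut 𝕜 _ u X).PosSemidef := by
  simpa [star_eq_conjTranspose] using hX.mul_mul_conjTranspose_same (u : Matrix n n 𝕜)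

lemma trace_conjStarAlgAut (u : unitaryGroup n 𝕜) (X : Matrix n n 𝕜) :
    (conjStarAlgAut 𝕜 _ u X).trace = X.trace := by
  rw [conjStarAlgAut_apply, trace_mul_cycle, coe_star_mul_self, one_mul]

lemma conjStarAlgAut_permUnitary_diagonal (σ : Equiv.Perm n) (d : n → 𝕜) :
    conjStarAlgAut 𝕜 _ (σ.permUnitary 𝕜) (diagonal d) = diagonal (d ∘ σ) := by
  rw [conjStarAlgAut_apply]
  exact permMatrix_mul_diagonal_mul_star_permMatrix σ d

lemma star_mul_conjStarAlgAut_mul (u v : unitaryGroup n 𝕜) (X : Matrix n n 𝕜) :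
    star ((v * star u : unitaryGroup n 𝕜) : Matrix n n 𝕜) * conjStarAlgAut 𝕜 _ v X *
      (v * star u : unitaryGroup n 𝕜) = conjStarAlgAut 𝕜 _ u X := by
  simp only [conjStarAlgAut_apply, MulMemClass.coe_mul, coe_star, star_mul, star_star, mul_assoc]
  simp only [← mul_assoc (star (v : Matrix n n 𝕜)), coe_star_mul_self, one_mul]

end UnitaryConjugation

section DiagTransfer

def diagTransfer (Φ : Matrix n n 𝕜 →ₗ[𝕜] Matrix n n 𝕜) : Matrix n n ℝ :=
  of fun i j => RCLike.re (Φ (single j j 1) i i)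

variable {Φ : Matrix n n 𝕜 →ₗ[𝕜] Matrix n n 𝕜}

lemma diagTransfer_mem_doublyStochastic (hpos : ∀ X, X.PosSemidef → (Φ X).PosSemidef)
    (hunital : Φ 1 = 1) (htrace : ∀ X, (Φ X).trace = X.trace) :
    diagTransfer Φ ∈ doublyStochastic ℝ n := by
  refine mem_doublyStochastic_iff_sum.2 ⟨fun i j => ?_, fun i => ?_, fun j => ?_⟩
  · have hE : (single j j (1 : 𝕜)).PosSemidef := by
      rw [← diagonal_single]
      exact PosSemidef.diagonal fun k => by rcases eq_or_ne k j with rfl | h <;> simp [*]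
    exact (RCLike.nonneg_iff.1 (hpos _ hE).diag_nonneg).1
  · calc ∑ j, diagTransfer Φ i j = RCLike.re (Φ (∑ j, single j j 1) i i) := by
          simp [diagTransfer, sum_apply]
      _ = 1 := by simp [sum_single_one, hunital]
  · calc ∑ i, diagTransfer Φ i j = RCLike.re (Φ (single j j 1)).trace := by
          simp [diagTransfer, trace]
      _ = 1 := by simp [htrace]

lemma diagTransfer_conj_mem_doublyStochastic {Ψ : Matrix n n 𝕜 →ₗ[𝕜] Matrix n n 𝕜}
    (hpos : ∀ X, X.PosSemidef → (Ψ X).PosSemidef) (hunital : Ψ 1 = 1)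
    (htrace : ∀ X, (Ψ X).trace = X.trace) (u v : unitaryGroup n 𝕜) :
    diagTransfer ((conjStarAlgAut 𝕜 _ u).toAlgEquiv.toLinearMap ∘ₗ Ψ ∘ₗ
      (conjStarAlgAut 𝕜 _ v).toAlgEquiv.toLinearMap) ∈ doublyStochastic ℝ n := by
  refine diagTransfer_mem_doublyStochastic (fun X hX => ?_) ?_ fun X => ?_
  · exact (hpos _ (hX.conjStarAlgAut v)).conjStarAlgAut u
  · change conjStarAlgAut 𝕜 _ u (Ψ (conjStarAlgAut 𝕜 _ v 1)) = 1
    rw [map_one, hunital, map_one]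
  · exact (trace_conjStarAlgAut u _).trans ((htrace _).trans (trace_conjStarAlgAut v X))

lemma re_apply_diagonal_ofReal (b : n → ℝ) (i : n) :
    RCLike.re (Φ (diagonal (RCLike.ofReal ∘ b)) i i) = (diagTransfer Φ *ᵥ b) i := by
  have hsingle (j : n) : single j j (b j : 𝕜) = (b j : 𝕜) • single j j 1 := by
    rw [smul_single, smul_eq_mul, mul_one]
  simp only [← sum_single_eq_diagonal, Function.comp_apply, hsingle, map_sum, map_smul, sum_apply,
    smul_apply, smul_eq_mul, RCLike.re_ofReal_mul, mulVec, dotProduct, diagTransfer, of_apply,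
    mul_comm]

lemma eq_diagTransfer_mulVec {a b : n → ℝ}
    (h : Φ (diagonal (RCLike.ofReal ∘ b)) = diagonal (RCLike.ofReal ∘ a)) :
    a = diagTransfer Φ *ᵥ b := by
  ext i
  simp [← re_apply_diagonal_ofReal, h]

end DiagTransfer

lemma conjStarAlgAut_diagonal_eq_sum_conj (u v : unitaryGroup n 𝕜) (w : Equiv.Perm n → ℝ)
    {a b : n → ℝ} (h : a = ∑ σ, w σ • (b ∘ σ)) :
    conjStarAlgAut 𝕜 _ u (diagonal (RCLike.ofReal ∘ a)) =
      ∑ σ, w σ • (star ((v * star (u * σ.permUnitary 𝕜) : unitaryGroup n 𝕜) : Matrix n n 𝕜) *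
        conjStarAlgAut 𝕜 _ v (diagonal (RCLike.ofReal ∘ b)) *
          (v * star (u * σ.permUnitary 𝕜) : unitaryGroup n 𝕜)) := by
  have hdiag : diagonal (RCLike.ofReal ∘ a) =
      ∑ σ, w σ • diagonal (RCLike.ofReal ∘ b ∘ σ : n → 𝕜) := by
    ext j k
    rcases eq_or_ne j k with rfl | hjk
    · simp [h, sum_apply, RCLike.real_smul_eq_coe_mul]
    · simp [sum_apply, diagonal_apply_ne _ hjk]
  simp only [star_mul_conjStarAlgAut_mul, conjStarAlgAut_mul_apply,
    conjStarAlgAut_permUnitary_diagonal, hdiag, map_sum, RCLike.real_smul_eq_coe_smul (K := 𝕜),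
    map_smul]
  rfl

end Matrix

lemma Finset.sum_equivFin_symm_filter {ι N : Type*} [Fintype ι] [AddCommMonoid N] (p : ι → Prop)
    [DecidablePred p] (g : ι → N) (hg : ∀ i, g i ≠ 0 → p i) :
    ∑ j, g ((univ.filter p).equivFin.symm j) = ∑ i, g i :=
  ((univ.filter p).equivFin.symm.sum_comp fun i => g i).trans
    (((univ.filter p).sum_coe_sort g).trans (sum_filter_of_ne fun i _ => hg i))

lemma exists_fin_reindex_pos_weights {ι M : Type*} [Fintype ι] [AddCommMonoid M] [Module ℝ M]
    (w : ι → ℝ) (hw : ∀ i, 0 ≤ w i) (f : ι → M) :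
    ∃ (m : ℕ) (e : Fin m → ι), (∀ j, 0 < w (e j)) ∧ ∑ j, w (e j) = ∑ i, w i ∧
      ∑ j, w (e j) • f (e j) = ∑ i, w i • f i := by
  classical
  have hpos {i} (hi : w i ≠ 0) : 0 < w i := (hw i).lt_of_ne' hi
  set S := Finset.univ.filter (fun i => 0 < w i)
  exact ⟨S.card, fun j => S.equivFin.symm j,
    fun j => (Finset.mem_filter.1 (S.equivFin.symm j).2).2,
    Finset.sum_equivFin_symm_filter _ w fun i => hpos,
    Finset.sum_equivFin_symm_filter _ _ fun i h => hpos (left_ne_zero_of_smul h)⟩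

/-- if `Ψ` is a doubly stochastic linear operator on `n × n`
complex matrices (positive, unital, adjoint unital) and `A = Ψ B` with `A, B`
Hermitian, then `A` is a convex combination of unitary conjugates of `B`
with positive weights. -/
theorem doubly_stochastic_image_convex_combination (n : ℕ)
    (Ψ : Matrix (Fin n) (Fin n) ℂ →ₗ[ℂ] Matrix (Fin n) (Fin n) ℂ)
    (hpos : ∀ X : Matrix (Fin n) (Fin n) ℂ, X.PosSemidef → (Ψ X).PosSemidef)
    (hunital : Ψ 1 = 1)
    (hadj : ∀ X : Matrix (Fin n) (Fin n) ℂ, ((Ψ X)ᴴ).trace = (Xᴴ).trace)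
    (A B : Matrix (Fin n) (Fin n) ℂ)
    (hA : A.IsHermitian) (hB : B.IsHermitian) (hAB : A = Ψ B) :
    ∃ (m : ℕ) (k : Fin m → Matrix.unitaryGroup (Fin n) ℂ) (p : Fin m → ℝ),
      (∀ j, 0 < p j) ∧ (∑ j, p j) = 1 ∧
      A = ∑ j, p j • (star (k j : Matrix (Fin n) (Fin n) ℂ) * B * (k j)) := by
  set U := hA.eigenvectorUnitary
  set V := hB.eigenvectorUnitary
  have htrace (X : Matrix (Fin n) (Fin n) ℂ) : (Ψ X).trace = X.trace := by
    simpa only [trace_conjTranspose, star_inj] using hadj X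
  let Φ := (conjStarAlgAut ℂ _ (star U)).toAlgEquiv.toLinearMap ∘ₗ Ψ ∘ₗ
    (conjStarAlgAut ℂ _ V).toAlgEquiv.toLinearMap
  have hΦ : Φ (diagonal (RCLike.ofReal ∘ hB.eigenvalues)) =
      diagonal (RCLike.ofReal ∘ hA.eigenvalues) := by
    change conjStarAlgAut ℂ _ (star U) (Ψ (conjStarAlgAut ℂ _ V _)) = _
    rw [← hB.spectral_theorem, ← hAB, hA.conjStarAlgAut_star_eigenvectorUnitary]
  have hD : diagTransfer Φ ∈ doublyStochastic ℝ (Fin n) :=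
    diagTransfer_conj_mem_doublyStochastic hpos hunital htrace (star U) V
  obtain ⟨w, hw0, hw1, hwD⟩ := exists_eq_sum_perm_of_mem_doublyStochastic hD
  have ha : hA.eigenvalues = ∑ σ, w σ • (hB.eigenvalues ∘ σ) := by
    simp [eq_diagTransfer_mulVec hΦ, ← hwD, sum_mulVec, smul_mulVec, permMatrix_mulVec]
  have hconv := conjStarAlgAut_diagonal_eq_sum_conj U V w ha
  rw [← hA.spectral_theorem, ← hB.spectral_theorem] at hconv
  let k (σ : Equiv.Perm (Fin n)) : unitaryGroup (Fin n) ℂ := V * star (U * σ.permUnitary ℂ)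
  obtain ⟨m, e, he_pos, he_sum, he⟩ :=
    exists_fin_reindex_pos_weights w hw0 fun σ => star (k σ : Matrix (Fin n) (Fin n) ℂ) * B * k σ
  exact ⟨m, k ∘ e, w ∘ e, he_pos, he_sum.trans hw1, hconv.trans he.symm⟩
end

section
/- Let x(t) = e^{H(t)} be a smooth curve in the positive definite matrices with H(t) Hermitian, and write H(s) = k diag(h) k† with k unitary, h ∈ ℝ^n. Then Ḣ(s) = k (S^h ⊙ (k† (x(s)^{-1/2} ẋ(s) x(s)^{-1/2}) k)) k†, where S^h_{ij} = ((hᵢ-hⱼ)/2)/sinh((hᵢ-hⱼ)/2) and ⊙ is the Hadamard product. -/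
/-!
In the eigenbasis of `H s = k diag(h) k†` the derivative of `exp` at `diag(h)` multiplies the
`(i, j)` entry by the divided difference `(e^{hᵢ} - e^{hⱼ}) / (hᵢ - hⱼ)` (by `e^{hᵢ}` when
`hᵢ = hⱼ`). For `hᵢ ≠ hⱼ` this comes from differentiating `B e^B = e^B B`. For `hᵢ = hⱼ`,
differentiating `e^B = (e^{B/N})^N` expresses the entry through the derivative of `exp` at
`diag(h)/N`, which tends to the identity as `N → ∞`. Sandwiching by `e^{-H/2}` multiplies the
`(i, j)` entry by `e^{-(hᵢ+hⱼ)/2}`, which turns the divided difference into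
`sinh((hᵢ-hⱼ)/2) / ((hᵢ-hⱼ)/2)`, the reciprocal of `S^h_{ij}`.
-/

open Matrix NormedSpace
open scoped BigOperators

open Filter Topology

section BanachAlgebra

variable {𝕂 𝔸 : Type*} [RCLike 𝕂] [NormedRing 𝔸] [NormedAlgebra 𝕂 𝔸] [CompleteSpace 𝔸]

theorem hasFDerivAt_exp_fderiv (A : 𝔸) : HasFDerivAt (exp : 𝔸 → 𝔸) (fderiv 𝕂 exp A) A :=
  (exp_analytic A).differentiableAt.hasFDerivAt

-- Differentiate the identity `B * exp B = exp B * B`.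
theorem mul_fderiv_exp_sub_fderiv_exp_mul (A V : 𝔸) :
    A * fderiv 𝕂 exp A V - fderiv 𝕂 exp A V * A = exp A * V - V * exp A := by
  have hexp := hasFDerivAt_exp_fderiv (𝕂 := 𝕂) A
  have hzero : (fun B : 𝔸 => B * exp B - exp B * B) = fun _ => 0 :=
    funext fun B => sub_eq_zero.2 (Commute.refl B).exp_right.eq
  have hderiv : HasFDerivAt (fun B : 𝔸 => B * exp B - exp B * B) _ A :=
    ((hasFDerivAt_id A).mul' hexp).sub (hexp.mul' (hasFDerivAt_id A))
  rw [hzero] at hderiv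
  have := congrArg (· V) ((hasFDerivAt_const (0 : 𝔸) A).unique hderiv)
  simp only [_root_.zero_apply, id_eq, _root_.sub_apply, _root_.add_apply, _root_.smul_apply,
    smul_eq_mul, ContinuousLinearMap.id_apply, MulOpposite.smul_eq_mul_unop,
    MulOpposite.unop_op] at this
  rw [sub_eq_sub_iff_add_eq_add]
  exact sub_eq_zero.1 this.symm

-- Differentiate the identity `exp B = exp (B / N) ^ N`.
theorem fderiv_exp_eq_sum {N : ℕ} (hN : N ≠ 0) (A V : 𝔸) :
    fderiv 𝕂 exp A V = ∑ r ∈ Finset.range N, exp ((N : 𝕂)⁻¹ • A) ^ (N - 1 - r) *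
      fderiv 𝕂 exp ((N : 𝕂)⁻¹ • A) ((N : 𝕂)⁻¹ • V) * exp ((N : 𝕂)⁻¹ • A) ^ r := by
  have hroot (B : 𝔸) : exp B = exp ((N : 𝕂)⁻¹ • B) ^ N := by
    let _ : NormedAlgebra ℚ 𝔸 := NormedAlgebra.restrictScalars ℚ 𝕂 𝔸
    rw [← NormedSpace.exp_nsmul, ← Nat.cast_smul_eq_nsmul 𝕂, smul_smul,
      mul_inv_cancel₀ (Nat.cast_ne_zero.2 hN), one_smul]
  have hcomp : HasFDerivAt (fun B : 𝔸 => exp ((N : 𝕂)⁻¹ • B) ^ N) _ A :=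
    ((hasFDerivAt_exp_fderiv (𝕂 := 𝕂) ((N : 𝕂)⁻¹ • A)).comp A
      ((hasFDerivAt_id A).const_smul (N : 𝕂)⁻¹)).pow' N
  have := congrArg (· V)
    ((hasFDerivAt_exp_fderiv A).unique (hcomp.congr_of_eventuallyEq (.of_forall hroot)))
  simpa using this

theorem tendsto_fderiv_exp_inv_natCast_smul (A : 𝔸) :
    Tendsto (fun N : ℕ => fderiv 𝕂 exp ((N : 𝕂)⁻¹ • A)) atTop (𝓝 1) := by
  have hcont : ContinuousAt (fderiv 𝕂 (exp : 𝔸 → 𝔸)) 0 :=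
    (AnalyticOnNhd.fderiv (s := Set.univ) (fun B _ => exp_analytic B) 0 trivial).continuousAt
  rw [← (hasFDerivAt_exp_zero (𝕂 := 𝕂) (𝔸 := 𝔸)).fderiv]
  refine hcont.tendsto.comp ?_
  simpa using (tendsto_inv_atTop_nhds_zero_nat (𝕜 := 𝕂)).smul_const A

theorem fderiv_exp_units_conj (U : 𝔸ˣ) (A V : 𝔸) :
    fderiv 𝕂 exp (U * A * ↑U⁻¹) V = U * fderiv 𝕂 exp A (↑U⁻¹ * V * U) * ↑U⁻¹ := by
  let conj : 𝔸 →L[𝕂] 𝔸 := ContinuousLinearMap.mulLeftRight 𝕂 𝔸 U ↑U⁻¹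
  have hconj : ∀ B, conj B = U * B * ↑U⁻¹ := fun B => rfl
  have hcomm : (fun B => exp (conj B)) = fun B => conj (exp B) := by
    let _ : NormedAlgebra ℚ 𝔸 := NormedAlgebra.restrictScalars ℚ 𝕂 𝔸
    funext B; simp only [hconj, NormedSpace.exp_units_conj]
  have h1 : HasFDerivAt (fun B => exp (conj B)) _ A :=
    (hasFDerivAt_exp_fderiv (𝕂 := 𝕂) (conj A)).comp A conj.hasFDerivAt
  have h2 : HasFDerivAt (fun B => conj (exp B)) _ A :=
    conj.hasFDerivAt.comp A (hasFDerivAt_exp_fderiv (𝕂 := 𝕂) A)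
  rw [hcomm] at h1
  have := congrArg (· (↑U⁻¹ * V * U)) (h1.unique h2)
  simpa [hconj, mul_assoc] using this

end BanachAlgebra

section Unitary

variable {R : Type*} [Ring R] [StarRing R] {K : R}

theorem conj_star_conj_of_mem_unitary (hK : K ∈ unitary R) (X : R) :
    K * (star K * X * K) * star K = X := by
  rw [show K * (star K * X * K) * star K = (K * star K) * X * (K * star K) by noncomm_ring,
    Unitary.mul_star_self_of_mem hK, one_mul, mul_one]

theorem star_conj_conj_of_mem_unitary (hK : K ∈ unitary R) (X : R) :
    star K * (K * X * star K) * K = X := by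
  simpa using conj_star_conj_of_mem_unitary (Unitary.star_mem hK) X

theorem star_conj_sandwich_of_mem_unitary (hK : K ∈ unitary R) (E X : R) :
    star K * (K * E * star K * X * (K * E * star K)) * K = E * (star K * X * K) * E := by
  rw [show K * E * star K * X * (K * E * star K) = K * (E * (star K * X * K) * E) * star K by
    noncomm_ring, star_conj_conj_of_mem_unitary hK]

end Unitary

noncomputable def expDivDiff (a b : ℂ) : ℂ :=
  if a = b then Complex.exp a else (Complex.exp a - Complex.exp b) / (a - b)

theorem exp_neg_half_mul_exp_neg_half_mul_sub (a b : ℂ) :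
    Complex.exp (-a / 2) * Complex.exp (-b / 2) * (Complex.exp a - Complex.exp b) =
      2 * Complex.sinh ((a - b) / 2) := by
  rw [Complex.two_sinh, mul_sub, ← Complex.exp_add, ← Complex.exp_add, ← Complex.exp_add]
  ring_nf

theorem ite_div_sinh_mul_exp_mul_exp_mul_expDivDiff (x y : ℝ) :
    (if x = y then (1 : ℂ) else (((x - y) / 2) / Real.sinh ((x - y) / 2) : ℝ)) *
      (Complex.exp (-x / 2) * Complex.exp (-y / 2) * expDivDiff x y) = 1 := by
  by_cases hxy : x = y
  · subst hxy
    rw [if_pos rfl, expDivDiff, if_pos rfl, one_mul, ← Complex.exp_add, ← Complex.exp_add]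
    ring_nf
    exact Complex.exp_zero
  · have hxy' : (x : ℂ) - y ≠ 0 := sub_ne_zero.2 (by exact_mod_cast hxy)
    have hsinh : Complex.sinh (((x : ℂ) - y) / 2) ≠ 0 := by
      rw [← Complex.ofReal_ofNat, ← Complex.ofReal_sub, ← Complex.ofReal_div, ← Complex.ofReal_sinh]
      exact_mod_cast Real.sinh_ne_zero.2 (div_ne_zero (sub_ne_zero.2 hxy) two_ne_zero)
    rw [if_neg hxy, expDivDiff, if_neg (sub_ne_zero.1 hxy'), ← mul_div_assoc,
      exp_neg_half_mul_exp_neg_half_mul_sub]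
    push_cast
    field_simp

section Matrix

variable {n : Type*} [Fintype n] [DecidableEq n]

theorem exp_diagonal_eq (c : n → ℂ) :
    exp (diagonal c) = diagonal fun i => Complex.exp (c i) := by
  rw [Matrix.exp_diagonal, Pi.exp_def (𝔸 := fun _ : n => ℂ) c, Complex.exp_eq_exp_ℂ]

theorem exp_unitary_conj_diagonal {K : Matrix n n ℂ} (hK : K ∈ unitaryGroup n ℂ) (c : n → ℂ) :
    exp (K * diagonal c * star K) = K * diagonal (fun i => Complex.exp (c i)) * star K := by
  rw [← exp_diagonal_eq]
  exact Matrix.exp_units_conj (Unitary.toUnits ⟨K, hK⟩) _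

section LinftyOpNorm

-- `HasDerivAt` depends only on the topology, which this norm shares with the entrywise norm of
-- the final statement. `exp` in the statements below carries `Matrix`'s own topology, equal to the
-- norm topology only up to unfolding; conclusions of the general lemmas are therefore restated by
-- type ascription before being rewritten.
attribute [local instance] Matrix.linftyOpNormedRing Matrix.linftyOpNormedAlgebra

theorem fderiv_exp_diagonal_apply_of_ne (c : n → ℂ) (W : Matrix n n ℂ) {i j : n}
    (hij : c i ≠ c j) :
    fderiv ℂ exp (diagonal c) W i j = expDivDiff (c i) (c j) * W i j := by
  have h : diagonal c * fderiv ℂ exp (diagonal c) W - fderiv ℂ exp (diagonal c) W * diagonal c =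
      exp (diagonal c) * W - W * exp (diagonal c) :=
    mul_fderiv_exp_sub_fderiv_exp_mul _ _
  rw [exp_diagonal_eq] at h
  have hij' := congrArg (fun X : Matrix n n ℂ => X i j) h
  simp only [Matrix.sub_apply, diagonal_mul, mul_diagonal] at hij'
  rw [expDivDiff, if_neg hij, div_mul_eq_mul_div, eq_div_iff (sub_ne_zero.2 hij)]
  linear_combination hij'

theorem fderiv_exp_diagonal_apply_mul_exp_of_eq (c : n → ℂ) (W : Matrix n n ℂ) {i j : n}
    (hij : c i = c j) {N : ℕ} (hN : N ≠ 0) :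
    fderiv ℂ exp (diagonal c) W i j * Complex.exp ((N : ℂ)⁻¹ * c i) =
      Complex.exp (c i) * fderiv ℂ exp ((N : ℂ)⁻¹ • diagonal c) W i j := by
  have hsum : fderiv ℂ exp (diagonal c) W = ∑ r ∈ Finset.range N,
      exp ((N : ℂ)⁻¹ • diagonal c) ^ (N - 1 - r) *
        fderiv ℂ exp ((N : ℂ)⁻¹ • diagonal c) ((N : ℂ)⁻¹ • W) *
        exp ((N : ℂ)⁻¹ • diagonal c) ^ r :=
    fderiv_exp_eq_sum hN _ _
  rw [← diagonal_smul, exp_diagonal_eq] at hsum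
  simp only [diagonal_pow, map_smul] at hsum
  have hsum_ij := congrArg (fun X : Matrix n n ℂ => X i j) hsum
  simp only [Matrix.sum_apply, mul_diagonal, diagonal_mul, Matrix.smul_apply, Pi.pow_apply,
    Pi.smul_apply, smul_eq_mul, diagonal_smul, ← hij] at hsum_ij
  set e := Complex.exp ((N : ℂ)⁻¹ * c i)
  set Z := fderiv ℂ exp ((N : ℂ)⁻¹ • diagonal c) W i j
  have hterm : ∀ r ∈ Finset.range N, e ^ (N - 1 - r) * ((N : ℂ)⁻¹ * Z) * e ^ r =
      e ^ (N - 1) * ((N : ℂ)⁻¹ * Z) := by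
    intro r hr
    rw [mul_right_comm, ← pow_add, Nat.sub_add_cancel (by simp at hr; omega)]
  have he : e ^ N = Complex.exp (c i) := by
    rw [← Complex.exp_nat_mul, ← mul_assoc, mul_inv_cancel₀ (Nat.cast_ne_zero.2 hN), one_mul]
  rw [hsum_ij, Finset.sum_congr rfl hterm, Finset.sum_const, Finset.card_range, nsmul_eq_mul,
    ← he, ← pow_sub_one_mul hN]
  field_simp

theorem fderiv_exp_diagonal_apply_of_eq (c : n → ℂ) (W : Matrix n n ℂ) {i j : n}
    (hij : c i = c j) :
    fderiv ℂ exp (diagonal c) W i j = expDivDiff (c i) (c j) * W i j := by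
  rw [expDivDiff, if_pos hij]
  have hlhs : Tendsto (fun N : ℕ => fderiv ℂ exp (diagonal c) W i j * Complex.exp ((N : ℂ)⁻¹ * c i))
      atTop (𝓝 (fderiv ℂ exp (diagonal c) W i j)) := by
    have := ((tendsto_inv_atTop_nhds_zero_nat (𝕜 := ℂ)).mul_const (c i))
    simpa using (Complex.continuous_exp.tendsto _).comp this |>.const_mul _
  have hrhs : Tendsto (fun N : ℕ => Complex.exp (c i) * fderiv ℂ exp ((N : ℂ)⁻¹ • diagonal c) W i j)
      atTop (𝓝 (Complex.exp (c i) * W i j)) := by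
    have hentry : Continuous fun L : Matrix n n ℂ →L[ℂ] Matrix n n ℂ => L W i j := by fun_prop
    have hlim : Tendsto (fun N : ℕ => fderiv ℂ exp ((N : ℂ)⁻¹ • diagonal c)) atTop (𝓝 1) :=
      tendsto_fderiv_exp_inv_natCast_smul _
    simpa using ((hentry.tendsto 1).comp hlim).const_mul (Complex.exp (c i))
  exact tendsto_nhds_unique (hlhs.congr' ((eventually_ne_atTop 0).mono fun _ hN =>
    fderiv_exp_diagonal_apply_mul_exp_of_eq c W hij hN)) hrhs

theorem fderiv_exp_diagonal_apply (c : n → ℂ) (W : Matrix n n ℂ) (i j : n) :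
    fderiv ℂ exp (diagonal c) W i j = expDivDiff (c i) (c j) * W i j := by
  obtain hij | hij := eq_or_ne (c i) (c j)
  exacts [fderiv_exp_diagonal_apply_of_eq c W hij, fderiv_exp_diagonal_apply_of_ne c W hij]

theorem fderiv_exp_unitary_conj_diagonal {K : Matrix n n ℂ} (hK : K ∈ unitaryGroup n ℂ)
    (c : n → ℂ) (V : Matrix n n ℂ) (i j : n) :
    (star K * fderiv ℂ exp (K * diagonal c * star K) V * K) i j =
      expDivDiff (c i) (c j) * (star K * V * K) i j := by
  have h : fderiv ℂ exp (K * diagonal c * star K) V =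
      K * fderiv ℂ exp (diagonal c) (star K * V * K) * star K :=
    fderiv_exp_units_conj (Unitary.toUnits ⟨K, hK⟩) _ _
  rw [h, star_conj_conj_of_mem_unitary hK, fderiv_exp_diagonal_apply]

theorem star_mul_deriv_exp_comp_mul_apply {f : ℝ → Matrix n n ℂ} {f' x' : Matrix n n ℂ} {s : ℝ}
    (hf : HasDerivAt f f' s) (hx : HasDerivAt (fun t => exp (f t)) x' s)
    {K : Matrix n n ℂ} (hK : K ∈ unitaryGroup n ℂ) (c : n → ℂ)
    (hfs : f s = K * diagonal c * star K) (i j : n) :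
    (star K * x' * K) i j = expDivDiff (c i) (c j) * (star K * f' * K) i j := by
  have hx' : x' = fderiv ℂ exp (f s) f' :=
    hx.unique (((hasFDerivAt_exp_fderiv (f s)).restrictScalars ℝ).comp_hasDerivAt s hf)
  rw [hx', hfs, fderiv_exp_unitary_conj_diagonal hK]

end LinftyOpNorm

end Matrix

attribute [local instance] Matrix.normedAddCommGroup Matrix.normedSpace

theorem deriv_log_of_exp_curve_general (n : ℕ)
    (H : ℝ → Matrix (Fin n) (Fin n) ℂ)
    (s : ℝ)
    (dH : Matrix (Fin n) (Fin n) ℂ) (hdH : HasDerivAt H dH s)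
    (dx : Matrix (Fin n) (Fin n) ℂ)
    (hdx : HasDerivAt (fun t => NormedSpace.exp (H t)) dx s)
    (k : Matrix.unitaryGroup (Fin n) ℂ) (h : Fin n → ℝ)
    (hHs : H s = (k : Matrix (Fin n) (Fin n) ℂ) *
      Matrix.diagonal (fun i => (h i : ℂ)) * star (k : Matrix (Fin n) (Fin n) ℂ)) :
    dH = (k : Matrix (Fin n) (Fin n) ℂ) *
      Matrix.hadamard
        (Matrix.of fun i j : Fin n =>
          if h i = h j then (1 : ℂ)
          else (((h i - h j) / 2) / Real.sinh ((h i - h j) / 2) : ℝ))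
        (star (k : Matrix (Fin n) (Fin n) ℂ) *
          (NormedSpace.exp (-(1/2 : ℝ) • H s) * dx * NormedSpace.exp (-(1/2 : ℝ) • H s)) *
          (k : Matrix (Fin n) (Fin n) ℂ)) *
      star (k : Matrix (Fin n) (Fin n) ℂ) := by
  have hhalf : NormedSpace.exp (-(1/2 : ℝ) • H s) =
      k * diagonal (fun i => Complex.exp (-(h i : ℂ) / 2)) *
        star (k : Matrix (Fin n) (Fin n) ℂ) := by
    have hscale : (-(1/2 : ℝ)) • (fun i => (h i : ℂ)) = fun i => -(h i : ℂ) / 2 := by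
      funext i
      simp only [Pi.smul_apply, Complex.real_smul]
      push_cast
      ring
    rw [hHs, ← Matrix.smul_mul, ← Matrix.mul_smul, ← diagonal_smul, hscale,
      exp_unitary_conj_diagonal k.2]
  have hdiag := star_mul_deriv_exp_comp_mul_apply hdH hdx k.2 _ hHs
  conv_lhs => rw [← conj_star_conj_of_mem_unitary k.2 dH]
  congr 2
  ext i j
  rw [hadamard_apply, of_apply, hhalf, star_conj_sandwich_of_mem_unitary k.2, mul_diagonal,
    diagonal_mul, hdiag]
  linear_combination (-(star (k : Matrix (Fin n) (Fin n) ℂ) * dH * k) i j) *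
    ite_div_sinh_mul_exp_mul_exp_mul_expDivDiff (h i) (h j)

/-- for a differentiable curve `x(t) = e^{H(t)}` of positive
definite matrices with `H(t)` Hermitian and `H(s) = k diag(h) k†` (`k` unitary,
`h ∈ ℝⁿ`), the derivative of `H` satisfies
`Ḣ(s) = k (S^h ⊙ (k† (x(s)^{-1/2} ẋ(s) x(s)^{-1/2}) k)) k†`, where `S^h` has
entries `((hᵢ-hⱼ)/2)/sinh((hᵢ-hⱼ)/2)` and `x(s)^{-1/2} = e^{-H(s)/2}`. -/
theorem deriv_log_of_exp_curve (n : ℕ)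
    (H : ℝ → Matrix (Fin n) (Fin n) ℂ)
    (hHerm : ∀ t, (H t).IsHermitian)
    (s : ℝ)
    (dH : Matrix (Fin n) (Fin n) ℂ) (hdH : HasDerivAt H dH s)
    (dx : Matrix (Fin n) (Fin n) ℂ)
    (hdx : HasDerivAt (fun t => NormedSpace.exp (H t)) dx s)
    (k : Matrix.unitaryGroup (Fin n) ℂ) (h : Fin n → ℝ)
    (hHs : H s = (k : Matrix (Fin n) (Fin n) ℂ) *
      Matrix.diagonal (fun i => (h i : ℂ)) * star (k : Matrix (Fin n) (Fin n) ℂ)) :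
    dH = (k : Matrix (Fin n) (Fin n) ℂ) *
      Matrix.hadamard
        (Matrix.of fun i j : Fin n =>
          if h i = h j then (1 : ℂ)
          else (((h i - h j) / 2) / Real.sinh ((h i - h j) / 2) : ℝ))
        (star (k : Matrix (Fin n) (Fin n) ℂ) *
          (NormedSpace.exp (-(1/2 : ℝ) • H s) * dx * NormedSpace.exp (-(1/2 : ℝ) • H s)) *
          (k : Matrix (Fin n) (Fin n) ℂ)) *
      star (k : Matrix (Fin n) (Fin n) ℂ) :=
  deriv_log_of_exp_curve_general n H s dH hdH dx hdx k h hHs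
end

section
/- Let f : ℝ^n → ℝ be convex differentiable, Q : (ℝ^n)* → ℝ_{≥0} convex with Q² continuously differentiable, and let x(t) solve the Q-gradient flow ẋ(t) = -∇^Q f(x(t)) where ∇^Q f(x) = (1/2) d(Q²)_{df_x}. Then t ↦ Q(df_{x(t)}) is monotonically nonincreasing. -/
/-!
Write `φ(t) = Q²(df_{x(t)})`. Convexity of `Q²` at `df_{x(τ)}`, together with the flow equation
`ẋ(τ) = -½ ∇Q²(df_{x(τ)})`, gives `2⟪df_{x(τ)} - df_{x(s)}, ẋ(τ)⟫ ≤ φ(s) - φ(τ)`. Integrated over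
`[s, t]`, the left side becomes twice the Bregman divergence of `f` between `x(s)` and `x(t)`,
which is nonnegative, so the mean of `φ` over `[s, t]` is at most `φ(s)`; a continuous function
with this property is nonincreasing. This avoids the Hessian of `f`, which need not exist.
Continuity of `φ` comes from the continuity of the gradient of a differentiable convex function
in finite dimension.
-/

open scoped RealInnerProductSpace
open Set Filter Topology InnerProductSpace

theorem antitone_of_intervalIntegral_le_mul {φ : ℝ → ℝ} (hφ : Continuous φ)
    (h : ∀ s t, s ≤ t → ∫ τ in s..t, φ τ ≤ (t - s) * φ s) : Antitone φ := by
  intro a b hab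
  by_contra! hlt
  obtain ⟨c, hc, hmin⟩ :=
    isCompact_Icc.exists_isMinOn (nonempty_Icc.2 hab) hφ.continuousOn
  have hca : φ c ≤ φ a := hmin (left_mem_Icc.2 hab)
  have hcb : c < b := lt_of_le_of_ne hc.2 (by rintro rfl; linarith)
  have hstrict : ∫ _ in c..b, φ c < ∫ τ in c..b, φ τ :=
    intervalIntegral.integral_lt_integral_of_continuousOn_of_le_of_exists_lt hcb
      continuousOn_const hφ.continuousOn (fun τ hτ => hmin ⟨hc.1.trans hτ.1.le, hτ.2⟩)
      ⟨b, right_mem_Icc.2 hcb.le, hca.trans_lt hlt⟩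
  rw [intervalIntegral.integral_const, smul_eq_mul] at hstrict
  linarith [h c b hcb.le]

section Convex

variable {E : Type*} [NormedAddCommGroup E] [InnerProductSpace ℝ E] [CompleteSpace E]
  {f : E → ℝ} {G y : E}

theorem ConvexOn.add_inner_sub_le_of_hasGradientAt (hf : ConvexOn ℝ univ f)
    (hG : HasGradientAt f G y) (z : E) : f y + ⟪G, z - y⟫ ≤ f z := by
  let line : ℝ →ᵃ[ℝ] E := AffineMap.lineMap y z
  have hline : HasDerivAt (f ∘ line) ⟪G, z - y⟫ 0 := by
    have hG' : HasFDerivAt f (toDual ℝ E G) (line 0) := by simpa [line] using hG.hasFDerivAt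
    exact hG'.comp_hasDerivAt 0 AffineMap.hasDerivAt_lineMap
  have hslope := (hf.comp_affineMap line).le_slope_of_hasDerivAt (mem_univ 0) (mem_univ 1)
    zero_lt_one hline
  simp only [slope_def_field, Function.comp_apply, line, AffineMap.lineMap_apply_one,
    AffineMap.lineMap_apply_zero, sub_zero, div_one] at hslope
  linarith

theorem HasGradientAt.eq_of_forall_add_inner_sub_le (hG : HasGradientAt f G y) {a : E}
    (ha : ∀ z, f y + ⟪a, z - y⟫ ≤ f z) : a = G := by
  have hmin : IsLocalMin (fun z => f z - toDual ℝ E a z) y :=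
    Eventually.of_forall fun z => by
      have := ha z
      simp only [toDual_apply_apply, inner_sub_right] at this ⊢
      linarith
  have hzero := hmin.hasFDerivAt_eq_zero (hG.hasFDerivAt.sub (toDual ℝ E a).hasFDerivAt)
  rw [← map_sub, LinearIsometryEquiv.map_eq_zero_iff, sub_eq_zero] at hzero
  exact hzero.symm

theorem ConvexOn.continuous_of_hasGradientAt [FiniteDimensional ℝ E] {g : E → E}
    (hf : ConvexOn ℝ univ f) (hg : ∀ x, HasGradientAt f (g x) x) : Continuous g := by
  have hfc : Continuous f := Differentiable.continuous fun x => (hg x).differentiableAt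
  refine continuous_iff_continuousAt.2 fun x₀ => ?_
  obtain ⟨K, t, ht, hK⟩ := locallyLipschitzOn_univ.1 (hf.locallyLipschitzOn isOpen_univ) x₀
  have hbounded : ∀ᶠ x in 𝓝 x₀, g x ∈ Metric.closedBall 0 K := by
    filter_upwards [eventually_mem_nhds_iff.2 ht] with x hx
    rw [mem_closedBall_zero_iff, ← LinearIsometryEquiv.norm_map (toDual ℝ E)]
    exact (hg x).hasFDerivAt.le_of_lipschitzOn hx hK
  refine (isCompact_closedBall 0 _).tendsto_nhds_of_unique_mapClusterPt hbounded
    fun a _ ha => (hg x₀).eq_of_forall_add_inner_sub_le fun z => ?_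
  obtain ⟨U, hU, hgU⟩ := mapClusterPt_iff_ultrafilter.1 ha
  have hlim : Tendsto (fun x => f x + ⟪g x, z - x⟫) U (𝓝 (f x₀ + ⟪a, z - x₀⟫)) :=
    ((hfc.tendsto x₀).mono_left hU).add
      (hgU.inner (tendsto_const_nhds.sub (tendsto_id.mono_left hU)))
  exact le_of_tendsto hlim
    (Eventually.of_forall fun x => hf.add_inner_sub_le_of_hasGradientAt (hg x) z)

theorem intervalIntegral_comp_gradientFlow_le {q : E → ℝ} {g G : E → E} {x : ℝ → E}
    (hf : ConvexOn ℝ univ f) (hg : ∀ y, HasGradientAt f (g y) y)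
    (hq : ConvexOn ℝ univ q) (hG : ∀ p, HasGradientAt q (G p) p)
    (hx : ∀ t, HasDerivAt x (-((1/2 : ℝ) • G (g (x t)))) t)
    (hφ : Continuous fun t => q (g (x t))) {s t : ℝ} (hst : s ≤ t) :
    ∫ τ in s..t, q (g (x τ)) ≤ (t - s) * q (g (x s)) := by
  set φ := fun t => q (g (x t))
  have hdissipation : ∀ τ, 2 * ⟪g (x τ) - g (x s), -((1/2 : ℝ) • G (g (x τ)))⟫ ≤ φ s - φ τ := by
    intro τ
    have := hq.add_inner_sub_le_of_hasGradientAt (hG (g (x τ))) (g (x s))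
    rw [inner_neg_right, inner_smul_right, real_inner_comm, ← neg_sub, inner_neg_right]
    linarith
  let D τ := f (x τ) - f (x s) - ⟪g (x s), x τ - x s⟫
  have hD : ∀ τ, HasDerivAt D (⟪g (x τ) - g (x s), -((1/2 : ℝ) • G (g (x τ)))⟫) τ := by
    intro τ
    have hfx := (hg (x τ)).hasFDerivAt.comp_hasDerivAt τ (hx τ)
    have hpair := (hasDerivAt_const τ (g (x s))).inner ℝ ((hx τ).sub_const (x s))
    rw [inner_zero_left, add_zero] at hpair
    rw [inner_sub_left]
    exact (hfx.sub_const _).sub hpair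
  have hΦ : ∀ τ, HasDerivAt (fun τ => ∫ σ in s..τ, φ σ) (φ τ) τ := fun τ =>
    intervalIntegral.integral_hasDerivAt_right (hφ.intervalIntegrable s τ)
      hφ.stronglyMeasurable.stronglyMeasurableAtFilter hφ.continuousAt
  have hD₀ : D s = 0 := by simp [D]
  have hbregman : 0 ≤ D t := by
    linarith [hf.add_inner_sub_le_of_hasGradientAt (hg (x s)) (x t)]
  have hlin : ∀ τ, HasDerivAt (fun τ : ℝ => (τ - s) * φ s) (φ s) τ := fun τ => by
    simpa using ((hasDerivAt_id τ).sub_const s).mul_const (φ s)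
  have hM : Monotone fun τ => (τ - s) * φ s - (∫ σ in s..τ, φ σ) - 2 * D τ :=
    monotone_of_hasDerivAt_nonneg (fun τ => ((hlin τ).sub (hΦ τ)).sub ((hD τ).const_mul 2))
      fun τ => sub_nonneg.2 (by linarith [hdissipation τ])
  have hMst := hM hst
  simp only [sub_self, zero_mul, intervalIntegral.integral_same, hD₀] at hMst
  linarith

end Convex

theorem Q_gradient_flow_monotone_general (n : ℕ)
    (f : EuclideanSpace ℝ (Fin n) → ℝ)
    (hf : ConvexOn ℝ Set.univ f)
    (g : EuclideanSpace ℝ (Fin n) → EuclideanSpace ℝ (Fin n))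
    (hg : ∀ x, HasGradientAt f (g x) x)
    (Q : EuclideanSpace ℝ (Fin n) → ℝ)
    (hQnn : ∀ p, 0 ≤ Q p)
    (hQconv : ConvexOn ℝ Set.univ Q)
    (G : EuclideanSpace ℝ (Fin n) → EuclideanSpace ℝ (Fin n))
    (hG : ∀ p, HasGradientAt (fun q => (Q q) ^ 2) (G p) p)
    (x : ℝ → EuclideanSpace ℝ (Fin n))
    (hx : ∀ t : ℝ, HasDerivAt x (-((1/2 : ℝ) • G (g (x t)))) t) :
    Antitone (fun t : ℝ => Q (g (x t))) := by
  have hQsq : ConvexOn ℝ univ (fun q => Q q ^ 2) := hQconv.pow (fun p _ => hQnn p) 2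
  have hQsqc : Continuous fun q => Q q ^ 2 :=
    Differentiable.continuous fun p => (hG p).differentiableAt
  have hxc : Continuous x := Differentiable.continuous fun t => (hx t).differentiableAt
  have hφ : Continuous fun t => Q (g (x t)) ^ 2 :=
    hQsqc.comp ((hf.continuous_of_hasGradientAt hg).comp hxc)
  have hanti := antitone_of_intervalIntegral_le_mul hφ fun s t hst =>
    intervalIntegral_comp_gradientFlow_le hf hg hQsq hG hx hφ hst
  exact fun a b hab => (pow_le_pow_iff_left₀ (hQnn _) (hQnn _) two_ne_zero).1 (hanti hab)

/-- along the `Q`-gradient flow `ẋ = -∇^Q f(x)` with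
`∇^Q f(x) = (1/2) d(Q²)_{df_x}`, the quantity `Q(df_{x(t)})` is monotonically
nonincreasing, for `f` convex differentiable with gradient `g` and
`Q : (ℝⁿ)* → ℝ≥0` convex with `Q²` continuously differentiable. -/
theorem Q_gradient_flow_monotone (n : ℕ)
    (f : EuclideanSpace ℝ (Fin n) → ℝ)
    (hf : ConvexOn ℝ Set.univ f)
    (g : EuclideanSpace ℝ (Fin n) → EuclideanSpace ℝ (Fin n))
    (hg : ∀ x, HasGradientAt f (g x) x)
    (Q : EuclideanSpace ℝ (Fin n) → ℝ)
    (hQnn : ∀ p, 0 ≤ Q p)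
    (hQconv : ConvexOn ℝ Set.univ Q)
    (G : EuclideanSpace ℝ (Fin n) → EuclideanSpace ℝ (Fin n))
    (hG : ∀ p, HasGradientAt (fun q => (Q q) ^ 2) (G p) p)
    (hGcont : Continuous G)
    (x : ℝ → EuclideanSpace ℝ (Fin n))
    (hx : ∀ t : ℝ, HasDerivAt x (-((1/2 : ℝ) • G (g (x t)))) t) :
    Antitone (fun t : ℝ => Q (g (x t))) :=
  Q_gradient_flow_monotone_general n f hf g hg Q hQnn hQconv G hG x hx
end

section
/- Moment map as transported differential of the Kempf–Ness function: for a nonzero tensor v and positive definite x = (x₁,…,x_d), the differential of Φ_v(x) = log⟨v, x·v⟩ in direction X = (X₁,…,X_d) (Hermitian) equals Σᵢ trace( μ_i(x^{1/2}·v) · x_i^{-1/2} X_i x_i^{-1/2} ), where x^{1/2} = (x₁^{1/2},…,x_d^{1/2}) and μ_i is the i-th moment map component. -/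
open Matrix
open scoped BigOperators ComplexOrder

/-- The factor-wise action of a tuple of matrices on a `d`-tensor. -/
noncomputable def tupleAction {d : ℕ} {n : Fin d → ℕ}
    (a : ∀ i : Fin d, Matrix (Fin (n i)) (Fin (n i)) ℂ)
    (v : (∀ i : Fin d, Fin (n i)) → ℂ) : (∀ i : Fin d, Fin (n i)) → ℂ :=
  fun j => ∑ j' : (∀ i : Fin d, Fin (n i)), (∏ i : Fin d, a i (j i) (j' i)) * v j'

/-- The action of a matrix `H` on the `k`-th factor of a `d`-tensor. -/
noncomputable def factorAction {d : ℕ} {n : Fin d → ℕ} (k : Fin d)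
    (H : Matrix (Fin (n k)) (Fin (n k)) ℂ)
    (v : (∀ i : Fin d, Fin (n i)) → ℂ) : (∀ i : Fin d, Fin (n i)) → ℂ :=
  fun j => ∑ i : Fin (n k), H (j k) i * v (Function.update j k i)

/-- The Hermitian inner product on the tensor space. -/
noncomputable def tensorInner {d : ℕ} {n : Fin d → ℕ}
    (v w : (∀ i : Fin d, Fin (n i)) → ℂ) : ℂ :=
  ∑ j : (∀ i : Fin d, Fin (n i)), (starRingEnd ℂ) (v j) * w j

/-! Put `s = x^{1/2}` and `w = s·v`. Since `s` is Hermitian, moving it across the inner product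
gives `⟨v, x·v⟩ = ‖w‖²` and `⟨w, (s_k⁻¹ X_k s_k⁻¹ on factor k)·w⟩ = ⟨v, (x with x_k replaced
by X_k)·v⟩`. The action is multilinear in the tuple, so the derivative of `t ↦ ⟨v, (x + tX)·v⟩`
at `0` is the sum over `k` of the latter, which the moment map turns into
`‖w‖² · Σₖ tr (μₖ(w) s_k⁻¹ X_k s_k⁻¹)`; taking the logarithm divides by `‖w‖²`. -/

open Finset Function

theorem Fintype.prod_apply_update {ι : Type*} [Fintype ι] [DecidableEq ι] {α : ι → Type*}
    {M : Type*} [CommMonoid M] (F : ∀ i, α i → M) (g : ∀ i, α i) (k : ι) (a : α k) :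
    ∏ i, F i (update g k a i) = F k a * ∏ i ∈ univ.erase k, F i (g i) := by
  rw [← mul_prod_erase univ _ (mem_univ k), update_self]
  congr 1
  refine Finset.prod_congr rfl fun i hi => ?_
  rw [update_of_ne (ne_of_mem_erase hi)]

theorem sum_normSq_pos {ι : Type*} [Fintype ι] {w : ι → ℂ} (hw : w ≠ 0) :
    0 < ∑ j, Complex.normSq (w j) := by
  obtain ⟨j, hj⟩ := ne_iff.mp hw
  exact sum_pos' (fun j _ => Complex.normSq_nonneg _) ⟨j, mem_univ j, Complex.normSq_pos.mpr hj⟩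

theorem Matrix.IsHermitian.cfc_eq_mul_diagonal_mul {m 𝕜 : Type*} [Fintype m] [DecidableEq m]
    [RCLike 𝕜] {A : Matrix m m 𝕜} (hA : A.IsHermitian) (f : ℝ → ℝ) :
    cfc f A = (hA.eigenvectorUnitary : Matrix m m 𝕜) *
      diagonal (RCLike.ofReal ∘ f ∘ hA.eigenvalues) * (star hA.eigenvectorUnitary : Matrix m m 𝕜) := by
  rw [hA.cfc_eq, IsHermitian.cfc, Unitary.conjStarAlgAut_apply]

theorem Matrix.PosSemidef.cfc_sqrt_mul_self {m 𝕜 : Type*} [Fintype m] [DecidableEq m] [RCLike 𝕜]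
    {A : Matrix m m 𝕜} (hA : A.PosSemidef) : cfc Real.sqrt A * cfc Real.sqrt A = A := by
  have hA' : IsSelfAdjoint A := hA.1
  have hnonneg : ∀ r ∈ spectrum ℝ A, 0 ≤ r := by
    intro r hr
    obtain ⟨i, rfl⟩ := hA.1.spectrum_real_eq_range_eigenvalues ▸ hr
    exact hA.eigenvalues_nonneg i
  rw [← cfc_mul Real.sqrt Real.sqrt A]
  conv_rhs => rw [← cfc_id' ℝ A]
  exact cfc_congr fun r hr => Real.mul_self_sqrt (hnonneg r hr)

theorem HasDerivAt.log_re_of_eq_ofReal {g : ℝ → ℂ} {c : ℂ} {r t : ℝ}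
    (hg : HasDerivAt g (r * c) t) (ht : g t = r) (hr : 0 < r) :
    HasDerivAt (fun s => Real.log (g s).re) c.re t := by
  have hlog := (Complex.reCLM.hasFDerivAt.comp_hasDerivAt t hg).log (by simpa [ht] using hr.ne')
  refine hlog.congr_deriv ?_
  rw [Function.comp_apply, ht, Complex.reCLM_apply, Complex.reCLM_apply, Complex.re_ofReal_mul,
    Complex.ofReal_re, mul_div_cancel_left₀ _ hr.ne']

section TensorAction

variable {d : ℕ} {n : Fin d → ℕ}

theorem tupleAction_zero (a : ∀ i, Matrix (Fin (n i)) (Fin (n i)) ℂ) :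
    tupleAction a (0 : (∀ i, Fin (n i)) → ℂ) = 0 := by
  funext j
  simp [tupleAction]

theorem tupleAction_one (v : (∀ i, Fin (n i)) → ℂ) :
    tupleAction (fun _ => 1) v = v := by
  funext j
  have hdelta (j' : ∀ i, Fin (n i)) :
      ∏ i, (1 : Matrix (Fin (n i)) (Fin (n i)) ℂ) (j i) (j' i) = if j = j' then 1 else 0 := by
    split_ifs with h
    · subst h
      simp [one_apply]
    · obtain ⟨i, hi⟩ := ne_iff.mp h
      exact prod_eq_zero (mem_univ i) (one_apply_ne hi)
  simp [tupleAction, hdelta]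

theorem tupleAction_tupleAction (a b : ∀ i, Matrix (Fin (n i)) (Fin (n i)) ℂ)
    (v : (∀ i, Fin (n i)) → ℂ) :
    tupleAction a (tupleAction b v) = tupleAction (fun i => a i * b i) v := by
  funext j
  have hprod (j'' : ∀ i, Fin (n i)) : ∏ i, (a i * b i) (j i) (j'' i) =
      ∑ j' : ∀ i, Fin (n i), ∏ i, a i (j i) (j' i) * b i (j' i) (j'' i) := by
    simp only [mul_apply, Fintype.prod_sum]
  simp only [tupleAction, hprod, mul_sum, sum_mul]
  rw [sum_comm]
  refine sum_congr rfl fun j'' _ => sum_congr rfl fun j' _ => ?_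
  rw [prod_mul_distrib]
  ring

theorem tupleAction_ne_zero {a : ∀ i, Matrix (Fin (n i)) (Fin (n i)) ℂ} (ha : ∀ i, IsUnit (a i))
    {v : (∀ i, Fin (n i)) → ℂ} (hv : v ≠ 0) : tupleAction a v ≠ 0 := by
  intro h
  have hinv : (fun i => (a i)⁻¹ * a i) = fun _ => 1 :=
    funext fun i => nonsing_inv_mul _ ((isUnit_iff_isUnit_det _).mp (ha i))
  apply hv
  rw [← tupleAction_one v, ← hinv, ← tupleAction_tupleAction, h, tupleAction_zero]

theorem factorAction_tupleAction (k : Fin d) (B : Matrix (Fin (n k)) (Fin (n k)) ℂ)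
    (a : ∀ i, Matrix (Fin (n i)) (Fin (n i)) ℂ) (v : (∀ i, Fin (n i)) → ℂ) :
    factorAction k B (tupleAction a v) = tupleAction (update a k (B * a k)) v := by
  funext j
  simp only [factorAction, tupleAction, mul_sum]
  rw [sum_comm]
  refine sum_congr rfl fun j' _ => ?_
  rw [Fintype.prod_apply_update (fun m (c : Matrix (Fin (n m)) (Fin (n m)) ℂ) => c (j m) (j' m)),
    mul_apply, sum_mul, sum_mul]
  refine sum_congr rfl fun i _ => ?_
  rw [Fintype.prod_apply_update (fun m (i : Fin (n m)) => a m i (j' m))]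
  ring

theorem tensorInner_tupleAction_left (a : ∀ i, Matrix (Fin (n i)) (Fin (n i)) ℂ)
    (v w : (∀ i, Fin (n i)) → ℂ) :
    tensorInner (tupleAction a v) w = tensorInner v (tupleAction (fun i => (a i)ᴴ) w) := by
  simp only [tensorInner, tupleAction, map_sum, conjTranspose_apply, sum_mul, mul_sum,
    Complex.star_def]
  rw [sum_comm]
  refine sum_congr rfl fun j' _ => sum_congr rfl fun j _ => ?_
  rw [map_mul, map_prod]
  ring

theorem tensorInner_self (w : (∀ i, Fin (n i)) → ℂ) :
    tensorInner w w = ((∑ j, Complex.normSq (w j) : ℝ) : ℂ) := by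
  simp only [tensorInner, Complex.ofReal_sum, Complex.normSq_eq_conj_mul_self]

theorem tensorInner_sum_right {ι : Type*} (s : Finset ι) (v : (∀ i, Fin (n i)) → ℂ)
    (w : ι → (∀ i, Fin (n i)) → ℂ) :
    tensorInner v (∑ k ∈ s, w k) = ∑ k ∈ s, tensorInner v (w k) := by
  simp only [tensorInner, Finset.sum_apply, mul_sum]
  exact sum_comm

theorem tensorInner_tupleAction_self_of_isHermitian {s : ∀ i, Matrix (Fin (n i)) (Fin (n i)) ℂ}
    (hs : ∀ i, (s i)ᴴ = s i) (v : (∀ i, Fin (n i)) → ℂ) :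
    tensorInner (tupleAction s v) (tupleAction s v) =
      tensorInner v (tupleAction (fun i => s i * s i) v) := by
  rw [tensorInner_tupleAction_left, tupleAction_tupleAction]
  simp only [hs]

theorem tensorInner_factorAction_conj_inv_of_isHermitian
    {s : ∀ i, Matrix (Fin (n i)) (Fin (n i)) ℂ} (hs : ∀ i, (s i)ᴴ = s i) (hu : ∀ i, IsUnit (s i)) (k : Fin d)
    (Y : Matrix (Fin (n k)) (Fin (n k)) ℂ) (v : (∀ i, Fin (n i)) → ℂ) :
    tensorInner (tupleAction s v) (factorAction k ((s k)⁻¹ * Y * (s k)⁻¹) (tupleAction s v)) =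
      tensorInner v (tupleAction (update (fun i => s i * s i) k Y) v) := by
  have hdet : IsUnit (s k).det := (isUnit_iff_isUnit_det _).mp (hu k)
  rw [factorAction_tupleAction, tensorInner_tupleAction_left, tupleAction_tupleAction]
  congr 2
  funext i
  rcases eq_or_ne i k with rfl | hik
  · simp only [update_self, hs, Matrix.mul_assoc, nonsing_inv_mul _ hdet, Matrix.mul_one,
      mul_nonsing_inv_cancel_left (h := hdet)]
  · simp only [update_of_ne hik, hs]

theorem HasDerivAt.tensorInner_right {f : ℝ → (∀ i, Fin (n i)) → ℂ}
    {f' : (∀ i, Fin (n i)) → ℂ} {t : ℝ} (hf : HasDerivAt f f' t) (v : (∀ i, Fin (n i)) → ℂ) :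
    HasDerivAt (fun t => tensorInner v (f t)) (tensorInner v f') t :=
  HasDerivAt.fun_sum fun j _ => (hasDerivAt_pi.mp hf j).const_mul _

theorem hasDerivAt_tupleAction_add_smul (x X : ∀ i, Matrix (Fin (n i)) (Fin (n i)) ℂ)
    (v : (∀ i, Fin (n i)) → ℂ) :
    HasDerivAt (fun t : ℝ => tupleAction (fun i => x i + t • X i) v)
      (∑ k, tupleAction (update x k (X k)) v) 0 := by
  have hentry (i : Fin d) (p q : Fin (n i)) :
      HasDerivAt (fun t : ℝ => (x i + t • X i) p q) (X i p q) 0 := by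
    simpa using ((hasDerivAt_id (0 : ℝ)).smul_const (X i p q)).const_add (x i p q)
  refine hasDerivAt_pi.mpr fun j => ?_
  have hsum := HasDerivAt.fun_sum (u := univ) fun j' _ =>
    (HasDerivAt.fun_finsetProd (u := univ) fun i _ => hentry i (j i) (j' i)).mul_const (v j')
  refine hsum.congr_deriv ?_
  rw [Finset.sum_apply]
  simp only [zero_smul, add_zero, smul_eq_mul, tupleAction, sum_mul]
  rw [sum_comm]
  refine sum_congr rfl fun k _ => sum_congr rfl fun j' _ => ?_
  rw [Fintype.prod_apply_update (fun m (c : Matrix (Fin (n m)) (Fin (n m)) ℂ) => c (j m) (j' m))]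
  ring

end TensorAction

/-- the differential of the Kempf–Ness function
`Φ_v(x) = log ⟨v, x·v⟩` at positive definite `x = (x₁,…,x_d)` in a Hermitian
direction `X = (X₁,…,X_d)` equals
`Σᵢ trace (μᵢ(x^{1/2}·v) · xᵢ^{-1/2} Xᵢ xᵢ^{-1/2})`, where `μᵢ` are the moment
map components of the transformed tensor `x^{1/2}·v`. -/
theorem kempf_ness_differential_eq_moment_map (d : ℕ) (n : Fin d → ℕ)
    (v : (∀ i : Fin d, Fin (n i)) → ℂ) (hv : v ≠ 0)
    (x X : ∀ i : Fin d, Matrix (Fin (n i)) (Fin (n i)) ℂ)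
    (hx : ∀ i, (x i).PosDef) (hX : ∀ i, (X i).IsHermitian)
    (s : ∀ i : Fin d, Matrix (Fin (n i)) (Fin (n i)) ℂ)
    (hs : ∀ i, s i = (((hx i).posSemidef).1.eigenvectorUnitary : Matrix (Fin (n i)) (Fin (n i)) ℂ) *
      diagonal ((↑) ∘ (Real.sqrt ·) ∘ ((hx i).posSemidef).1.eigenvalues) *
      (star ((hx i).posSemidef).1.eigenvectorUnitary : Matrix (Fin (n i)) (Fin (n i)) ℂ))
    (M : ∀ i : Fin d, Matrix (Fin (n i)) (Fin (n i)) ℂ)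
    (hM : ∀ (i : Fin d) (H : Matrix (Fin (n i)) (Fin (n i)) ℂ), H.IsHermitian →
      (M i * H).trace =
        tensorInner (tupleAction s v) (factorAction i H (tupleAction s v)) /
          tensorInner (tupleAction s v) (tupleAction s v)) :
    HasDerivAt
      (fun t : ℝ => Real.log
        ((tensorInner v (tupleAction (fun i => x i + t • X i) v)).re))
      (∑ i : Fin d, ((M i * ((s i)⁻¹ * X i * (s i)⁻¹)).trace).re) 0 := by
  have hsqrt (i : Fin d) : s i = cfc Real.sqrt (x i) :=
    (hs i).trans ((hx i).1.cfc_eq_mul_diagonal_mul _).symm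
  have hsq : (fun i => s i * s i) = x :=
    funext fun i => (hsqrt i).symm ▸ (hx i).posSemidef.cfc_sqrt_mul_self
  have hsh (i : Fin d) : (s i)ᴴ = s i := (hsqrt i).symm ▸ (cfc_predicate Real.sqrt (x i)).star_eq
  have hu (i : Fin d) : IsUnit (s i) := isUnit_mul_self_iff.mp (congrFun hsq i ▸ (hx i).isUnit)
  set w := tupleAction s v
  have hw : tensorInner v (tupleAction x v) = tensorInner w w := by
    rw [tensorInner_tupleAction_self_of_isHermitian hsh, hsq]
  have hw0 : tensorInner w w ≠ 0 := by
    rw [tensorInner_self]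
    exact_mod_cast (sum_normSq_pos (tupleAction_ne_zero hu hv)).ne'
  have hterm (i : Fin d) : tensorInner v (tupleAction (update x i (X i)) v) =
      tensorInner w w * (M i * ((s i)⁻¹ * X i * (s i)⁻¹)).trace := by
    have hH : ((s i)⁻¹ * X i * (s i)⁻¹).IsHermitian := by
      simpa [conjTranspose_nonsing_inv, hsh] using isHermitian_conjTranspose_mul_mul (s i)⁻¹ (hX i)
    rw [hM i _ hH, mul_div_cancel₀ _ hw0,
      tensorInner_factorAction_conj_inv_of_isHermitian hsh hu, hsq]
  have hderiv := (hasDerivAt_tupleAction_add_smul x X v).tensorInner_right v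
  rw [tensorInner_sum_right, sum_congr rfl fun i _ => hterm i, ← mul_sum, tensorInner_self]
    at hderiv
  rw [← Complex.re_sum]
  refine hderiv.log_re_of_eq_ofReal ?_ (sum_normSq_pos (tupleAction_ne_zero hu hv))
  simp only [zero_smul, add_zero, hw, tensorInner_self]
end
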